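/- Let a be a complex sequence of length N and b a unimodular sequence of length P, and let c = a⊗b. Then for 0 ≤ k < P and -N < j < N, Λ(c)(Pj+k) = Λ(a)(j)·Λ(b)(k) + Λ(a)(j+1)·Λ(b)(k-P), where Λ denotes aperiodic autocorrelation. -/

import Mathlib

open Finset

/-- Aperiodic cross-correlation of length-`L` sequences `x, y` at integer shift `τ`. -/
noncomputable def acc (L : ℕ) (x y : ℕ → ℂ) (τ : ℤ) : ℂ :=
  if 0 ≤ τ ∧ τ < (L : ℤ) then
    ∑ i ∈ Finset.range (L - τ.toNat), x (i + τ.toNat) * (starRingEnd ℂ) (y i)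
  else if -(L : ℤ) < τ ∧ τ < 0 then
    ∑ i ∈ Finset.range (L - (-τ).toNat), x i * (starRingEnd ℂ) (y (i + (-τ).toNat))
  else 0

/-- Aperiodic autocorrelation. -/
noncomputable def aac (L : ℕ) (x : ℕ → ℂ) (τ : ℤ) : ℂ := acc L x x τ

/-- Kronecker product of a sequence with a length-`P` sequence: `(a ⊗ b)_(nP+p) = a_n b_p`. -/
noncomputable def kron (P : ℕ) (a b : ℕ → ℂ) : ℕ → ℂ := fun n => a (n / P) * b (n % P)

/-- Aperiodic cross-correlation sum of two codes (row-wise sum). -/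
noncomputable def ccs {M : ℕ} (L : ℕ) (A B : Fin M → ℕ → ℂ) (τ : ℤ) : ℂ :=
  ∑ ν, acc L (A ν) (B ν) τ

lemma acc_eq (L : ℕ) (x y : ℕ → ℂ) (τ : ℤ) :
    acc L x y τ = ∑ i ∈ Finset.range L, ∑ i' ∈ Finset.range L,
      if (i' : ℤ) = (i : ℤ) + τ then x i' * (starRingEnd ℂ) (y i) else 0 := by
  unfold acc
  by_cases h1 : 0 ≤ τ ∧ τ < (L : ℤ)
  · rw [if_pos h1]
    have hc : ∀ i i' : ℕ, ((i' : ℤ) = (i : ℤ) + τ) ↔ i' = i + τ.toNat := by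
      intro i i'; omega
    simp only [hc, Finset.sum_ite_eq', Finset.mem_range]
    rw [show Finset.range (L - τ.toNat)
        = (Finset.range L).filter (fun i => i + τ.toNat < L) by
      ext i; simp only [Finset.mem_range, Finset.mem_filter]; omega]
    rw [Finset.sum_filter]
  · rw [if_neg h1]
    by_cases h2 : -(L : ℤ) < τ ∧ τ < 0
    · rw [if_pos h2]
      have hc : ∀ i i' : ℕ, ((i' : ℤ) = (i : ℤ) + τ) ↔ i = i' + (-τ).toNat := by
        intro i i'; omega
      simp only [hc]
      rw [Finset.sum_comm]
      simp only [Finset.sum_ite_eq', Finset.mem_range]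
      rw [show Finset.range (L - (-τ).toNat)
          = (Finset.range L).filter (fun i => i + (-τ).toNat < L) by
        ext i; simp only [Finset.mem_range, Finset.mem_filter]; omega]
      rw [Finset.sum_filter]
    · rw [if_neg h2]
      symm
      apply Finset.sum_eq_zero
      intro i hi
      apply Finset.sum_eq_zero
      intro i' hi'
      rw [if_neg]
      simp only [Finset.mem_range] at hi hi'
      omega

lemma sum_range_mul' (N P : ℕ) (f : ℕ → ℂ) :
    ∑ i ∈ Finset.range (N * P), f i
      = ∑ n ∈ Finset.range N, ∑ p ∈ Finset.range P, f (n * P + p) := by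
  induction N with
  | zero => simp
  | succ n ih =>
      rw [Nat.succ_mul, Finset.sum_range_add, ih, Finset.sum_range_succ]

lemma kron_apply (P : ℕ) (a b : ℕ → ℂ) (n p : ℕ) (hP : 0 < P) (hp : p < P) :
    kron P a b (n * P + p) = a n * b p := by
  unfold kron
  rw [show n * P + p = P * n + p by ring, Nat.mul_add_div hP, Nat.mul_add_mod,
    Nat.div_eq_of_lt hp, Nat.mod_eq_of_lt hp, add_zero]

lemma key_iff (P n p n' p' j k : ℤ) (hP : 0 < P) (hp : 0 ≤ p) (hp2 : p < P)
    (hp' : 0 ≤ p') (hp'2 : p' < P) (hk : 0 ≤ k) (hk2 : k < P) :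
    n' * P + p' = n * P + p + (P * j + k) ↔
      ((n' = n + j ∧ p' = p + k) ∨ (n' = n + j + 1 ∧ p' = p + (k - P))) := by
  constructor
  · intro h
    have hd : (n' - n - j) * P = p + k - p' := by linear_combination h
    have h0 : 0 ≤ n' - n - j := by nlinarith
    have h1 : n' - n - j ≤ 1 := by nlinarith
    have h2 : n' - n - j = 0 ∨ n' - n - j = 1 := by omega
    rcases h2 with h2 | h2 <;> rw [h2] at hd <;> simp at hd
    · left; omega
    · right; omega
  · rintro (⟨h1, h2⟩ | ⟨h1, h2⟩) <;> subst h1 <;> subst h2 <;> ring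

theorem stmt2 (N P : ℕ) (a b : ℕ → ℂ)
    (hb : ∀ p < P, ‖b p‖ = 1)
    (c : ℕ → ℂ) (hc : c = kron P a b)
    (k : ℕ) (hk : k < P) (j : ℤ) (hj1 : -(N : ℤ) < j) (hj2 : j < (N : ℤ)) :
    aac (N * P) c ((P : ℤ) * j + k) =
      aac N a j * aac P b k + aac N a (j + 1) * aac P b ((k : ℤ) - P) := by
  have hP : 0 < P := Nat.pos_of_ne_zero (by omega)
  subst hc
  unfold aac
  simp only [acc_eq]
  simp only [sum_range_mul']
  simp only [Finset.sum_mul_sum, ← Finset.sum_add_distrib]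
  apply Finset.sum_congr rfl
  intro n hn
  apply Finset.sum_congr rfl
  intro p hp
  apply Finset.sum_congr rfl
  intro n' hn'
  apply Finset.sum_congr rfl
  intro p' hp'
  simp only [Finset.mem_range] at hn hp hn' hp'
  rw [kron_apply P a b n' p' hP hp', kron_apply P a b n p hP hp]
  have hcond : ((↑(n' * P + p') : ℤ) = (↑(n * P + p) : ℤ) + ((P : ℤ) * j + k)) ↔
      (((n' : ℤ) = n + j ∧ (p' : ℤ) = p + k) ∨
        ((n' : ℤ) = n + j + 1 ∧ (p' : ℤ) = p + ((k : ℤ) - P))) := by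
    push_cast
    exact key_iff P n p n' p' j k (by exact_mod_cast hP) (by positivity)
      (by exact_mod_cast hp) (by positivity) (by exact_mod_cast hp')
      (by positivity) (by exact_mod_cast hk)
  rw [if_congr hcond rfl rfl]
  have hPk : (0 : ℤ) < P := by exact_mod_cast hP
  split_ifs <;>
    first
      | (exfalso; omega)
      | (simp only [map_mul, mul_zero, zero_mul, add_zero, zero_add]; try ring)
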